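/- arXiv:chao-dyn/9304010 — 2 statements merged into one kernel-verified Lean document; each statement's English description precedes it below -/
import Mathlib

section
/- Let P(λ) = λ⁴ + c₃λ³ + c₂λ² + c₁λ + c₀ be a monic quartic polynomial with real coefficients. Then P has a pair of pure imaginary roots and c₃ ≠ 0 if and only if c₀c₃² − c₁c₂c₃ + c₁² = 0 and c₁c₃ > 0; in that case the pure imaginary roots are ±i√(c₁/c₃). -/
open Polynomial ComplexConjugate

/-!
At `λ = iω` with `ω` real, the quartic takes the value
`(ω⁴ - c₂ω² + c₀) + i ω (c₁ - c₃ω²)`. For `ω ≠ 0` and `c₃ ≠ 0` the imaginary part vanishes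
exactly when `ω² = c₁/c₃`, and substituting this into `c₃²` times the real part gives
`c₀c₃² - c₁c₂c₃ + c₁²`. So a pure imaginary root exists iff that expression vanishes and
`c₁/c₃` is a positive square, i.e. `c₁c₃ > 0`. The root `-iω` comes for free as the complex
conjugate of `iω`.
-/

lemma Polynomial.aeval_conj_eq_zero_iff {K : Type*} [RCLike K] (p : ℝ[X]) (z : K) :
    aeval (conj z) p = 0 ↔ aeval z p = 0 := by
  rw [aeval_conj, map_eq_zero]

lemma quartic_aeval_ofReal_mul_I (c₀ c₁ c₂ c₃ ω : ℝ) :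
    aeval ((ω : ℂ) * Complex.I) (X ^ 4 + C c₃ * X ^ 3 + C c₂ * X ^ 2 + C c₁ * X + C c₀) =
      ⟨ω ^ 4 - c₂ * ω ^ 2 + c₀, ω * (c₁ - c₃ * ω ^ 2)⟩ := by
  apply Complex.ext <;> simp [pow_succ] <;> ring

lemma quartic_aeval_ofReal_mul_I_eq_zero_iff {c₀ c₁ c₂ c₃ ω : ℝ} (hc₃ : c₃ ≠ 0) (hω : ω ≠ 0) :
    aeval ((ω : ℂ) * Complex.I) (X ^ 4 + C c₃ * X ^ 3 + C c₂ * X ^ 2 + C c₁ * X + C c₀) = 0 ↔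
      ω ^ 2 = c₁ / c₃ ∧ c₀ * c₃ ^ 2 - c₁ * c₂ * c₃ + c₁ ^ 2 = 0 := by
  rw [quartic_aeval_ofReal_mul_I, Complex.ext_iff]
  have hsq_iff : c₁ = c₃ * ω ^ 2 ↔ ω ^ 2 = c₁ / c₃ := by rw [eq_div_iff hc₃, mul_comm, eq_comm]
  simp only [Complex.zero_re, Complex.zero_im]
  rw [mul_eq_zero, or_iff_right hω, sub_eq_zero, hsq_iff, and_comm]
  refine and_congr_right fun hsq => ?_
  have hres : c₀ * c₃ ^ 2 - c₁ * c₂ * c₃ + c₁ ^ 2 = c₃ ^ 2 * (ω ^ 4 - c₂ * ω ^ 2 + c₀) := by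
    rw [show ω ^ 4 = (ω ^ 2) ^ 2 by ring, hsq]; field_simp; ring
  rw [hres, mul_eq_zero, or_iff_right (pow_ne_zero 2 hc₃)]

/-- A monic real quartic `λ⁴ + c₃λ³ + c₂λ² + c₁λ + c₀` has a pair of pure imaginary
roots with `c₃ ≠ 0` iff `c₀c₃² - c₁c₂c₃ + c₁² = 0` and `c₁c₃ > 0`; in that case the
pure imaginary roots are `±i√(c₁/c₃)`. -/
theorem quartic_pure_imaginary_roots_iff (c₀ c₁ c₂ c₃ : ℝ) :
    (((∃ ω : ℝ, ω ≠ 0 ∧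
        aeval ((ω : ℂ) * Complex.I)
          (X ^ 4 + C c₃ * X ^ 3 + C c₂ * X ^ 2 + C c₁ * X + C c₀) = 0 ∧
        aeval (-((ω : ℂ) * Complex.I))
          (X ^ 4 + C c₃ * X ^ 3 + C c₂ * X ^ 2 + C c₁ * X + C c₀) = 0) ∧ c₃ ≠ 0) ↔
      (c₀ * c₃ ^ 2 - c₁ * c₂ * c₃ + c₁ ^ 2 = 0 ∧ 0 < c₁ * c₃)) ∧
    ((c₀ * c₃ ^ 2 - c₁ * c₂ * c₃ + c₁ ^ 2 = 0 ∧ 0 < c₁ * c₃) →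
      aeval ((Real.sqrt (c₁ / c₃) : ℂ) * Complex.I)
        (X ^ 4 + C c₃ * X ^ 3 + C c₂ * X ^ 2 + C c₁ * X + C c₀ : Polynomial ℝ) = 0 ∧
      aeval (-((Real.sqrt (c₁ / c₃) : ℂ) * Complex.I))
        (X ^ 4 + C c₃ * X ^ 3 + C c₂ * X ^ 2 + C c₁ * X + C c₀ : Polynomial ℝ) = 0) := by
  have conj_root {ω : ℝ} : -((ω : ℂ) * Complex.I) = conj ((ω : ℂ) * Complex.I) := by simp
  have sqrt_root (h : c₀ * c₃ ^ 2 - c₁ * c₂ * c₃ + c₁ ^ 2 = 0 ∧ 0 < c₁ * c₃) :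
      c₃ ≠ 0 ∧ √(c₁ / c₃) ≠ 0 ∧ aeval ((√(c₁ / c₃) : ℂ) * Complex.I)
        (X ^ 4 + C c₃ * X ^ 3 + C c₂ * X ^ 2 + C c₁ * X + C c₀) = 0 := by
    obtain ⟨hres, hpos⟩ := h
    have hc₃ : c₃ ≠ 0 := by rintro rfl; simp at hpos
    have hquot : 0 < c₁ / c₃ := by
      rw [← mul_div_mul_right c₁ c₃ hc₃, ← sq]; positivity
    exact ⟨hc₃, (Real.sqrt_pos.2 hquot).ne',
      (quartic_aeval_ofReal_mul_I_eq_zero_iff hc₃ (Real.sqrt_pos.2 hquot).ne').2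
        ⟨Real.sq_sqrt hquot.le, hres⟩⟩
  refine ⟨⟨?_, fun h => ?_⟩, fun h => ?_⟩
  · rintro ⟨⟨ω, hω, hroot, -⟩, hc₃⟩
    obtain ⟨hsq, hres⟩ := (quartic_aeval_ofReal_mul_I_eq_zero_iff hc₃ hω).1 hroot
    have hc₁ : c₁ * c₃ = (c₃ * ω) ^ 2 := by rw [mul_pow, hsq]; field_simp
    exact ⟨hres, hc₁ ▸ by positivity⟩
  · obtain ⟨hc₃, hω, hroot⟩ := sqrt_root h
    exact ⟨⟨_, hω, hroot, conj_root ▸ (aeval_conj_eq_zero_iff _ _).2 hroot⟩, hc₃⟩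
  · obtain ⟨-, -, hroot⟩ := sqrt_root h
    exact ⟨hroot, conj_root ▸ (aeval_conj_eq_zero_iff _ _).2 hroot⟩
end

section
/- Define F : ℝ² → ℝ³ by F(x,t) = (x + t, −xt − t²/2, x²t + xt² + t³/3), the surface swept out by trajectories of the vector field X = ∂_x − x ∂_y + x² ∂_z through the x-axis. Then: (i) the Jacobian matrix of F at (0,0) has rank 1 (both partial derivative vectors equal (1,0,0)), so the surface is singular there; (ii) the intersection of the image of F with the plane {first coordinate = 0} is exactly the cusp curve {(0, s²/2, −s³/3) : s ∈ ℝ}, and every point (0,y,z) of this intersection satisfies 9z² = 8y³. -/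
/-!
At `t = 0` the trajectory through `(x, 0, 0)` starts with velocity `X(x, 0, 0) = (1, 0, x²)`, so
`∂ₓF = ∂ₜF = (1, 0, 0)` at the origin and `dF` there is `(x, t) ↦ (x + t) • (1, 0, 0)`.
The first coordinate of `F(x, t)` is `x + t`, so the plane `{first coordinate = 0}` meets the
surface exactly along `F(s, -s) = (0, s²/2, -s³/3)`, a semicubical parabola.
-/

/-- `F(x,t) = Φ((x,0,0),t)`: the surface swept out by the trajectories of
`X = ∂ₓ - x ∂_y + x² ∂_z` through the x-axis. -/
noncomputable def cuspSurface (q : ℝ × ℝ) : ℝ × ℝ × ℝ :=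
  (q.1 + q.2, -q.1 * q.2 - q.2 ^ 2 / 2, q.1 ^ 2 * q.2 + q.1 * q.2 ^ 2 + q.2 ^ 3 / 3)

open ContinuousLinearMap

theorem ContinuousLinearMap.rank_smulRight {K M₁ M₂ : Type*} [Field K] [TopologicalSpace K]
    [AddCommGroup M₁] [Module K M₁] [TopologicalSpace M₁]
    [AddCommGroup M₂] [Module K M₂] [TopologicalSpace M₂] [ContinuousSMul K M₂]
    {f : M₁ →L[K] K} (hf : f ≠ 0) {x : M₂} (hx : x ≠ 0) :
    LinearMap.rank (f.smulRight x : M₁ →ₗ[K] M₂) = 1 := by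
  rw [LinearMap.rank, range_smulRight_apply hf, Module.rank_eq_one_iff_finrank_eq_one]
  exact finrank_span_singleton hx

/-- The `t`-column is `X (cuspSurface q)`, since `t ↦ cuspSurface (x, t)` is a trajectory
of `X`. -/
noncomputable def cuspSurfaceFDeriv (q : ℝ × ℝ) : ℝ × ℝ →L[ℝ] ℝ × ℝ × ℝ :=
  (fst ℝ ℝ ℝ).smulRight (1, -q.2, 2 * q.1 * q.2 + q.2 ^ 2) +
    (snd ℝ ℝ ℝ).smulRight (1, -(q.1 + q.2), (q.1 + q.2) ^ 2)

theorem hasFDerivAt_cuspSurface (q : ℝ × ℝ) :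
    HasFDerivAt cuspSurface (cuspSurfaceFDeriv q) q := by
  have hx : HasFDerivAt (fun q : ℝ × ℝ => q.1) (fst ℝ ℝ ℝ) q := hasFDerivAt_fst
  have ht : HasFDerivAt (fun q : ℝ × ℝ => q.2) (snd ℝ ℝ ℝ) q := hasFDerivAt_snd
  have h := (hx.add ht).prodMk (((hx.neg.mul ht).sub ((ht.pow 2).mul_const 2⁻¹)).prodMk
    ((((hx.pow 2).mul ht).add (hx.mul (ht.pow 2))).add ((ht.pow 3).mul_const 3⁻¹)))
  refine h.congr_fderiv (ext fun p => ?_)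
  simp only [cuspSurfaceFDeriv, Pi.neg_apply, ContinuousLinearMap.prod_apply, add_apply,
    sub_apply, neg_apply, smul_apply, smulRight_apply, coe_fst', coe_snd', nsmul_eq_mul,
    smul_eq_mul, Prod.smul_mk, Prod.mk_add_mk, Prod.mk.injEq]
  refine ⟨by ring, by ring, by ring⟩

theorem fderiv_cuspSurface_zero :
    fderiv ℝ cuspSurface 0 = (fst ℝ ℝ ℝ + snd ℝ ℝ ℝ).smulRight (1, 0, 0) := by
  rw [(hasFDerivAt_cuspSurface 0).fderiv]
  ext <;> simp [cuspSurfaceFDeriv]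

theorem rank_fderiv_cuspSurface_zero :
    LinearMap.rank (fderiv ℝ cuspSurface 0 : (ℝ × ℝ) →ₗ[ℝ] ℝ × ℝ × ℝ) = 1 := by
  rw [fderiv_cuspSurface_zero]
  refine rank_smulRight (fun h => ?_) (by simp)
  simpa using congr($h (1, 0))

theorem fst_cuspSurface_eq_zero_iff {q : ℝ × ℝ} : (cuspSurface q).1 = 0 ↔ q.2 = -q.1 :=
  add_eq_zero_iff_eq_neg'

theorem cuspSurface_self_neg (s : ℝ) : cuspSurface (s, -s) = (0, s ^ 2 / 2, -s ^ 3 / 3) := by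
  simp only [cuspSurface, Prod.mk.injEq]
  refine ⟨by ring, by ring, by ring⟩

theorem range_cuspSurface_inter_fst_eq_zero :
    {q : ℝ × ℝ × ℝ | q ∈ Set.range cuspSurface ∧ q.1 = 0} =
      {q : ℝ × ℝ × ℝ | ∃ s : ℝ, q = (0, s ^ 2 / 2, -s ^ 3 / 3)} := by
  ext q
  constructor
  · rintro ⟨⟨⟨x, t⟩, rfl⟩, h0⟩
    obtain rfl : t = -x := fst_cuspSurface_eq_zero_iff.mp h0
    exact ⟨x, cuspSurface_self_neg x⟩
  · rintro ⟨s, rfl⟩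
    exact ⟨⟨_, cuspSurface_self_neg s⟩, rfl⟩

/-- (i) The Jacobian of `F` at `(0,0)` has rank 1, with both partial derivatives equal
to `(1,0,0)`; (ii) the intersection of the image of `F` with the plane `{first
coordinate = 0}` is the cusp `{(0, s²/2, -s³/3)}`, each point of which satisfies
`9z² = 8y³`. -/
theorem cuspSurface_singular_cusp :
    (fderiv ℝ cuspSurface (0, 0) (1, 0) = (1, 0, 0) ∧
      fderiv ℝ cuspSurface (0, 0) (0, 1) = (1, 0, 0) ∧
      LinearMap.rank (fderiv ℝ cuspSurface (0, 0) : (ℝ × ℝ) →ₗ[ℝ] ℝ × ℝ × ℝ) = 1) ∧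
    ({q : ℝ × ℝ × ℝ | q ∈ Set.range cuspSurface ∧ q.1 = 0} =
      {q : ℝ × ℝ × ℝ | ∃ s : ℝ, q = (0, s ^ 2 / 2, -s ^ 3 / 3)}) ∧
    (∀ y z : ℝ, ((0 : ℝ), y, z) ∈ Set.range cuspSurface →
      9 * z ^ 2 = 8 * y ^ 3) := by
  refine ⟨⟨?_, ?_, rank_fderiv_cuspSurface_zero⟩, range_cuspSurface_inter_fst_eq_zero, ?_⟩
  · simp [← Prod.zero_eq_mk, fderiv_cuspSurface_zero]
  · simp [← Prod.zero_eq_mk, fderiv_cuspSurface_zero]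
  · intro y z hyz
    obtain ⟨s, hs⟩ :=
      (Set.ext_iff.mp range_cuspSurface_inter_fst_eq_zero (0, y, z)).mp ⟨hyz, rfl⟩
    simp only [Prod.mk.injEq] at hs
    obtain ⟨-, rfl, rfl⟩ := hs
    ring
end
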